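/- Let T be a tree (a connected acyclic simple graph) on a finite nonempty vertex set V, and let c : V → Bool be a coloring of its vertices. Define v ∼ w if and only if c v = c w and there is a path in T from v to w all of whose vertices have color c v; this is an equivalence relation whose classes are the maximal monochromatic connected blocks of T. Define a simple graph B on the quotient V/∼ by declaring two distinct classes [u] and [w] adjacent if and only if some vertex of [u] is adjacent in T to some vertex of [w]. Then B is a tree, and any two adjacent vertices of B have different colors (where the color of a class is the common color of its elements); in particular, B is bipartite. -/

import Mathlib

/-! Every edge of the block graph comes from an edge `uw` of `T` whose ends have different
colors, since an edge between equally colored vertices lies inside a block. Such an edge `uw`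
is a bridge of `T`, and every block, being monochromatic, stays connected after deleting `uw`.
Hence a walk avoiding the block edge `[u][w]` would lift to a walk from `u` to `w` avoiding
`uw`, which is impossible; so every edge of the block graph is a bridge, and it is a tree. -/

/-- `v` and `w` lie in the same maximal monochromatic connected block of the
graph `T` with vertex coloring `c`: they have the same color and are joined by
a walk all of whose vertices have that color. -/
def sameBlock {V : Type*} (T : SimpleGraph V) (c : V → Bool) (v w : V) : Prop :=
  c v = c w ∧ ∃ p : T.Walk v w, ∀ u ∈ p.support, c u = c v

/-- The block graph `B`: vertices are the maximal monochromatic connected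
blocks of `(T, c)`, and two distinct blocks are adjacent iff some vertex of one
is adjacent in `T` to some vertex of the other. -/
def blockGraph {V : Type*} (T : SimpleGraph V) (c : V → Bool) :
    SimpleGraph (Quot (sameBlock T c)) where
  Adj x y := x ≠ y ∧ ∃ u w : V,
    Quot.mk (sameBlock T c) u = x ∧ Quot.mk (sameBlock T c) w = y ∧ T.Adj u w
  symm := by
    constructor
    rintro x y ⟨hne, u, w, hu, hw, hadj⟩
    exact ⟨hne.symm, w, u, hw, hu, hadj.symm⟩
  loopless := by
    constructor
    rintro x ⟨hne, -⟩
    exact hne rfl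

namespace SimpleGraph

variable {V W : Type*} {G : SimpleGraph V} {H : SimpleGraph W}

lemma Reachable.map_of_adj {f : V → W}
    (hf : ∀ a b, G.Adj a b → f a = f b ∨ H.Adj (f a) (f b))
    {a b : V} (h : G.Reachable a b) : H.Reachable (f a) (f b) := by
  obtain ⟨p⟩ := h
  induction p with
  | nil => rfl
  | cons hadj _ ih =>
    rcases hf _ _ hadj with heq | hadj'
    · exact heq ▸ ih
    · exact hadj'.reachable.trans ih

lemma Reachable.of_map {f : V → W} (hf : Function.Surjective f)
    (hfiber : ∀ a b, f a = f b → G.Reachable a b)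
    (hadj : ∀ a b, H.Adj (f a) (f b) → G.Reachable a b)
    {a b : V} (h : H.Reachable (f a) (f b)) : G.Reachable a b := by
  obtain ⟨p⟩ := h
  suffices ∀ x y (p : H.Walk x y) a b, f a = x → f b = y → G.Reachable a b from
    this _ _ p a b rfl rfl
  intro x y p
  induction p with
  | nil => rintro a b rfl hb; exact hfiber a b hb.symm
  | @cons x z y hxz _ ih =>
    rintro a b rfl rfl
    obtain ⟨d, rfl⟩ := hf z
    exact (hadj a d hxz).trans (ih d b rfl rfl)

end SimpleGraph

open SimpleGraph

section

variable {V : Type*} {T : SimpleGraph V} {c : V → Bool}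

lemma sameBlock_equivalence (T : SimpleGraph V) (c : V → Bool) : Equivalence (sameBlock T c) where
  refl _ := ⟨rfl, Walk.nil, by simp⟩
  symm := by
    rintro v w ⟨hc, p, hp⟩
    exact ⟨hc.symm, p.reverse, fun u hu => (hp u (by simpa using hu)).trans hc⟩
  trans := by
    rintro u v w ⟨huv, p, hp⟩ ⟨hvw, q, hq⟩
    refine ⟨huv.trans hvw, p.append q, fun x hx => ?_⟩
    rcases Walk.mem_support_append_iff p q |>.mp hx with h | h
    · exact hp x h
    · exact (hq x h).trans huv.symm

lemma quot_mk_eq_iff_sameBlock {v w : V} :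
    Quot.mk (sameBlock T c) v = Quot.mk (sameBlock T c) w ↔ sameBlock T c v w :=
  Quot.eq.trans (sameBlock_equivalence T c).eqvGen_iff

lemma sameBlock_of_adj {u w : V} (h : T.Adj u w) (hc : c u = c w) : sameBlock T c u w :=
  ⟨hc, h.toWalk, by simp [hc]⟩

lemma reachable_deleteEdges_of_sameBlock {u w a b : V} (hc : c u ≠ c w)
    (h : sameBlock T c a b) : (T.deleteEdges {s(u, w)}).Reachable a b := by
  obtain ⟨-, p, hp⟩ := h
  have huw : s(u, w) ∉ p.edges := fun he => hc <|
    (hp u (p.fst_mem_support_of_mem_edges he)).trans (hp w (p.snd_mem_support_of_mem_edges he)).symm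
  exact ⟨p.toDeleteEdges _ fun e he hmem => (Set.mem_singleton_iff.mp hmem ▸ huw) he⟩

def blockColor (T : SimpleGraph V) (c : V → Bool) : Quot (sameBlock T c) → Bool :=
  Quot.lift c fun _ _ h => h.1

lemma blockGraph_adj_iff {x y : Quot (sameBlock T c)} :
    (blockGraph T c).Adj x y ↔
      ∃ u w, Quot.mk _ u = x ∧ Quot.mk _ w = y ∧ T.Adj u w ∧ c u ≠ c w := by
  constructor
  · rintro ⟨hne, u, w, rfl, rfl, huw⟩
    exact ⟨u, w, rfl, rfl, huw,
      fun hc => hne (quot_mk_eq_iff_sameBlock.mpr (sameBlock_of_adj huw hc))⟩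
  · rintro ⟨u, w, rfl, rfl, huw, hc⟩
    exact ⟨fun h => hc (quot_mk_eq_iff_sameBlock.mp h).1, u, w, rfl, rfl, huw⟩

lemma blockColor_ne_of_adj {x y : Quot (sameBlock T c)} (h : (blockGraph T c).Adj x y) :
    blockColor T c x ≠ blockColor T c y := by
  obtain ⟨u, w, rfl, rfl, -, hc⟩ := blockGraph_adj_iff.mp h
  exact hc

lemma blockGraph_connected (hT : T.Connected) : (blockGraph T c).Connected := by
  have : Nonempty (Quot (sameBlock T c)) := hT.nonempty.map (Quot.mk _)
  refine .mk fun x y => ?_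
  obtain ⟨v, rfl⟩ := Quot.exists_rep x
  obtain ⟨w, rfl⟩ := Quot.exists_rep y
  refine (hT v w).map_of_adj fun a b hab => ?_
  by_cases h : Quot.mk (sameBlock T c) a = Quot.mk _ b
  · exact .inl h
  · exact .inr ⟨h, a, b, rfl, rfl, hab⟩

lemma blockGraph_isAcyclic (hT : T.IsAcyclic) : (blockGraph T c).IsAcyclic := by
  refine isAcyclic_iff_forall_adj_isBridge.mpr fun x y h => ?_
  obtain ⟨u, w, rfl, rfl, huw, hc⟩ := blockGraph_adj_iff.mp h
  refine isBridge_iff.mpr fun hB => isBridge_iff.mp (isAcyclic_iff_forall_adj_isBridge.mp hT huw) ?_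
  refine hB.of_map Quot.exists_rep
    (fun a b hab => reachable_deleteEdges_of_sameBlock hc (quot_mk_eq_iff_sameBlock.mp hab)) ?_
  intro a b hadj
  obtain ⟨⟨-, a', b', ha, hb, hab⟩, hne⟩ := deleteEdges_adj.mp hadj
  have hab' : (T.deleteEdges {s(u, w)}).Adj a' b' := by
    refine deleteEdges_adj.mpr ⟨hab, fun heq => hne ?_⟩
    simpa [ha, hb] using congrArg (Sym2.map (Quot.mk (sameBlock T c))) heq
  exact (reachable_deleteEdges_of_sameBlock hc (quot_mk_eq_iff_sameBlock.mp ha.symm)).trans <|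
    hab'.reachable.trans (reachable_deleteEdges_of_sameBlock hc (quot_mk_eq_iff_sameBlock.mp hb))

end

theorem stmt4_general {V : Type*}
    (T : SimpleGraph V) (hT : T.IsTree) (c : V → Bool) :
    (blockGraph T c).IsTree ∧
    (∀ x y : Quot (sameBlock T c), (blockGraph T c).Adj x y →
      ∀ u w : V, Quot.mk (sameBlock T c) u = x →
        Quot.mk (sameBlock T c) w = y → c u ≠ c w) ∧
    (blockGraph T c).Colorable 2 := by
  refine ⟨⟨blockGraph_connected hT.connected, blockGraph_isAcyclic hT.isAcyclic⟩, ?_, ?_⟩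
  · rintro x y h u w rfl rfl
    exact blockColor_ne_of_adj h
  · exact (Coloring.mk (blockColor T c) blockColor_ne_of_adj).colorable

/-- for a tree `T` on a finite nonempty vertex set with a
`Bool`-coloring `c`, the block graph is a tree, adjacent blocks have different
colors, and in particular the block graph is bipartite (2-colorable). -/
theorem stmt4 {V : Type*} [Fintype V] [Nonempty V]
    (T : SimpleGraph V) (hT : T.IsTree) (c : V → Bool) :
    (blockGraph T c).IsTree ∧
    (∀ x y : Quot (sameBlock T c), (blockGraph T c).Adj x y →
      ∀ u w : V, Quot.mk (sameBlock T c) u = x →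
        Quot.mk (sameBlock T c) w = y → c u ≠ c w) ∧
    (blockGraph T c).Colorable 2 :=
  stmt4_general T hT c
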